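/- For fixed μK, μN ∈ P([0,1]), the map p ↦ F_p(μK, μN) is continuous on [0,1). In particular, as p → 0⁺, F_p(μK, μN) → KL(μK ‖ μN), both when KL(μK ‖ μN) is finite and when it is +∞ (in which case F_p(μK, μN) → +∞). -/

import Mathlib

open MeasureTheory Filter Topology

abbrev I01 : Set ℝ := Set.Icc 0 1

open Classical in
/-- Kullback–Leibler divergence with logarithm base 2, valued in `EReal`. -/
noncomputable def klDiv2 {α : Type*} [MeasurableSpace α] (μ ν : Measure α) : EReal :=
  if μ ≪ ν ∧ Integrable (fun x => Real.logb 2 ((μ.rnDeriv ν x).toReal)) μ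
  then ((∫ x, Real.logb 2 ((μ.rnDeriv ν x).toReal) ∂μ : ℝ) : EReal)
  else ⊤

noncomputable def mix {α : Type*} [MeasurableSpace α] (p : ℝ) (μ ν : Measure α) : Measure α :=
  (ENNReal.ofReal p) • μ + (ENNReal.ofReal (1 - p)) • ν

/-- `F_p(μK, μN)`, with `F_0(μK, μN) = KL(μK ‖ μN)`. -/
noncomputable def Fp {α : Type*} [MeasurableSpace α] (p : ℝ) (μK μN : Measure α) : EReal :=
  if p = 0 then klDiv2 μK μN
  else klDiv2 μK (mix p μK μN) + (((1 - p) / p : ℝ) : EReal) * klDiv2 μN (mix p μK μN)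

/-!
For probability measures `klDiv2 = klDiv / log 2`, so up to that factor `F_p` is
`klDiv μK m_p + (1 - p) / p * klDiv μN m_p` with `m_p = p μK + (1 - p) μN`, a sum of
`ℝ≥0∞`-valued terms. Let `a, b` be the densities of `μK, μN` with respect to `μK + μN`, so that
`a + b = 1` and `m = p a + (1 - p) b` is the density of `m_p`. Both divergences are integrals of
perspectives `m * klFun (a / m)`, resp. `m * klFun (b / m)`, and `klFun x ≤ (x - 1) ^ 2` bounds
these by `(a - m) ^ 2 / m`, resp. `(b - m) ^ 2 / m`.

On `(0, 1)` we have `m ≥ min p (1 - p)`, so dominated convergence gives continuity.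
As `p → 0⁺`, the function `c ↦ c * klFun (a / c)` is convex and vanishes at `c = a`, so its
value at `m`, which lies between `a` and `b`, is at most its value at `b`: hence
`klDiv μK m_p ≤ klDiv μK μN`, and Fatou's lemma gives the matching lower bound for the liminf.
If `μK` is not absolutely continuous with respect to `μN`, then `b = 0` on a set of positive
measure, where the integrand is `p * klFun (1 / p) → ∞`. Finally
`klDiv μN m_p / p ≤ p * ∫ (a - b) ^ 2 / m`, which tends to `0` by dominated convergence when
`μK ≪ μN`, i.e. when `b > 0` almost everywhere.
-/

open InformationTheory Real Set
open scoped ENNReal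

variable {α : Type*} [MeasurableSpace α]

lemma mul_klFun_div {a c : ℝ} (hc : c ≠ 0) : c * klFun (a / c) = a * log (a / c) + c - a := by
  rw [klFun_apply]; field_simp

lemma klFun_le_sq_sub_one {x : ℝ} (hx : 0 ≤ x) : klFun x ≤ (x - 1) ^ 2 := by
  rcases hx.eq_or_lt with rfl | hx
  · simp [klFun_zero]
  rw [klFun_apply]
  nlinarith [mul_le_mul_of_nonneg_left (log_le_sub_one_of_pos hx) hx.le]

lemma mul_klFun_div_le_sq_div {a c : ℝ} (ha : 0 ≤ a) (hc : 0 < c) :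
    c * klFun (a / c) ≤ (a - c) ^ 2 / c := by
  calc c * klFun (a / c) ≤ c * (a / c - 1) ^ 2 :=
        mul_le_mul_of_nonneg_left (klFun_le_sq_sub_one (by positivity)) hc.le
    _ = (a - c) ^ 2 / c := by field_simp

lemma mul_klFun_div_le_inv {h c : ℝ} (h0 : 0 ≤ h) (h1 : h ≤ 1) (hc : 0 < c) (hc1 : c ≤ 1) :
    c * klFun (h / c) ≤ c⁻¹ := by
  calc c * klFun (h / c) ≤ (h - c) ^ 2 / c := mul_klFun_div_le_sq_div h0 hc
    _ ≤ 1 / c := by gcongr; nlinarith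
    _ = c⁻¹ := one_div c

lemma mul_klFun_div_convexComb_le {a b t : ℝ} (ha : 0 ≤ a) (hb : 0 < b) (ht0 : 0 ≤ t)
    (ht1 : t ≤ 1) :
    (t * a + (1 - t) * b) * klFun (a / (t * a + (1 - t) * b)) ≤ b * klFun (a / b) := by
  set c := t * a + (1 - t) * b
  have hkl : 0 ≤ b * klFun (a / b) := mul_nonneg hb.le (klFun_nonneg (by positivity))
  rcases ha.eq_or_lt with rfl | ha
  · simpa [c, klFun_zero] using mul_le_of_le_one_left hb.le (by linarith : 1 - t ≤ 1)
  have hc : 0 < c := by nlinarith [mul_nonneg ht0 ha.le, mul_nonneg (sub_nonneg.2 ht1) hb.le]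
  have hlog : t * log a + (1 - t) * log b ≤ log c :=
    (strictConcaveOn_log_Ioi.concaveOn).2 ha hb ht0 (sub_nonneg.2 ht1) (by ring)
  suffices c * klFun (a / c) ≤ (1 - t) * (b * klFun (a / b)) by nlinarith
  rw [mul_klFun_div hc.ne', mul_klFun_div hb.ne', log_div ha.ne' hc.ne', log_div ha.ne' hb.ne']
  nlinarith

lemma mul_klFun_div_convexComb_le_sq {a b p : ℝ} (hb : 0 ≤ b)
    (hc : 0 < p * a + (1 - p) * b) :
    (p * a + (1 - p) * b) * klFun (b / (p * a + (1 - p) * b))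
      ≤ p ^ 2 * (a - b) ^ 2 / (p * a + (1 - p) * b) := by
  calc _ ≤ (b - (p * a + (1 - p) * b)) ^ 2 / (p * a + (1 - p) * b) :=
        mul_klFun_div_le_sq_div hb hc
    _ = _ := by ring

lemma mul_sq_sub_le_convexComb {a b p : ℝ} (ha : 0 ≤ a) (hb : 0 ≤ b) (hab : a + b = 1)
    (hp0 : 0 ≤ p) (hp : p ≤ 1 / 2) : p * (a - b) ^ 2 ≤ p * a + (1 - p) * b := by
  obtain rfl : b = 1 - a := by linarith
  nlinarith [mul_nonneg (by linarith : 0 ≤ 1 - a) (by nlinarith : 0 ≤ 1 - 2 * p * (1 - 2 * a))]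

lemma tendsto_mul_klFun_inv_nhdsGT_zero :
    Tendsto (fun p : ℝ => p * klFun p⁻¹) (𝓝[>] 0) atTop := by
  have hlim : Tendsto (fun p : ℝ => -log p + (p - 1)) (𝓝[>] 0) atTop :=
    (tendsto_neg_atBot_atTop.comp tendsto_log_nhdsGT_zero).atTop_add
      (((continuous_sub_right (1 : ℝ)).tendsto 0).mono_left nhdsWithin_le_nhds)
  refine hlim.congr' (eventually_nhdsWithin_of_forall fun p (hp : 0 < p) => ?_)
  show -log p + (p - 1) = p * klFun p⁻¹
  rw [← one_div, mul_klFun_div hp.ne', one_div, log_inv]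
  ring

lemma klDiv_eq_lintegral_mul_klFun_div {μ ν ξ : Measure α} [IsFiniteMeasure μ]
    [IsFiniteMeasure ν] [SigmaFinite ξ] (hμν : μ ≪ ν) (hνξ : ν ≪ ξ) :
    klDiv μ ν = ∫⁻ x, ENNReal.ofReal ((ν.rnDeriv ξ x).toReal *
      klFun ((μ.rnDeriv ξ x).toReal / (ν.rnDeriv ξ x).toReal)) ∂ξ := by
  have hdiv : (fun x => ENNReal.ofReal (klFun (μ.rnDeriv ν x).toReal)) =ᵐ[ν]
      fun x => ENNReal.ofReal (klFun (μ.rnDeriv ξ x / ν.rnDeriv ξ x).toReal) := by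
    filter_upwards [Measure.rnDeriv_eq_div (hμν.trans hνξ) hνξ] with x hx
    rw [hx]
  rw [klDiv_eq_lintegral_klFun_of_ac hμν, lintegral_congr_ae hdiv,
    ← lintegral_rnDeriv_mul hνξ (by fun_prop)]
  refine lintegral_congr_ae ?_
  filter_upwards [Measure.rnDeriv_ne_top ν ξ] with x hx
  rw [ENNReal.ofReal_mul ENNReal.toReal_nonneg, ENNReal.ofReal_toReal hx, ENNReal.toReal_div]

lemma klDiv2_eq_klDiv_div (μ ν : Measure α) [IsProbabilityMeasure μ]
    [IsProbabilityMeasure ν] :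
    klDiv2 μ ν = ((klDiv μ ν / ENNReal.ofReal (log 2) : ℝ≥0∞) : EReal) := by
  have hint : Integrable (fun x => logb 2 ((μ.rnDeriv ν x).toReal)) μ ↔
      Integrable (llr μ ν) μ :=
    integrable_mul_const_iff (isUnit_iff_ne_zero.2 (inv_ne_zero (log_pos one_lt_two).ne')) _
  unfold klDiv2
  split_ifs with h
  · rw [hint] at h
    rw [klDiv_of_ac_of_integrable h.1 h.2, ← ENNReal.ofReal_div_of_pos (log_pos one_lt_two),
      EReal.coe_ennreal_ofReal, max_eq_left]
    · simp [logb, llr, integral_div]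
    · exact div_nonneg (integral_llr_add_sub_measure_univ_nonneg h.1 h.2) (log_nonneg one_le_two)
  · rw [hint, ← klDiv_ne_top_iff, not_not] at h
    simp [h, ENNReal.top_div_of_ne_top]

instance isFiniteMeasure_mix (p : ℝ) (μ ν : Measure α) [IsFiniteMeasure μ]
    [IsFiniteMeasure ν] : IsFiniteMeasure (mix p μ ν) :=
  have := μ.smul_finite (ENNReal.ofReal_ne_top (r := p))
  have := ν.smul_finite (ENNReal.ofReal_ne_top (r := 1 - p))
  inferInstanceAs (IsFiniteMeasure (_ + _))

lemma isProbabilityMeasure_mix {p : ℝ} (hp0 : 0 ≤ p) (hp1 : p ≤ 1) (μ ν : Measure α)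
    [IsProbabilityMeasure μ] [IsProbabilityMeasure ν] : IsProbabilityMeasure (mix p μ ν) := by
  constructor
  simp [mix, ← ENNReal.ofReal_add hp0 (sub_nonneg.2 hp1)]

lemma mix_zero (μ ν : Measure α) : mix 0 μ ν = ν := by simp [mix]

section Mix

variable {μ ν : Measure α}

lemma mix_absolutelyContinuous {ξ : Measure α} (hμ : μ ≪ ξ) (hν : ν ≪ ξ) (p : ℝ) :
    mix p μ ν ≪ ξ :=
  (hμ.smul_left _).add_left (hν.smul_left _)

lemma absolutelyContinuous_mix_left {p : ℝ} (hp : 0 < p) : μ ≪ mix p μ ν :=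
  (Measure.absolutelyContinuous_smul (ENNReal.ofReal_pos.2 hp).ne').trans
    (Measure.absolutelyContinuous_of_le (Measure.le_add_right le_rfl))

lemma absolutelyContinuous_mix_right {p : ℝ} (hp : p < 1) : ν ≪ mix p μ ν :=
  (Measure.absolutelyContinuous_smul (ENNReal.ofReal_pos.2 (sub_pos.2 hp)).ne').trans
    (Measure.absolutelyContinuous_of_le (Measure.le_add_left le_rfl))

lemma rnDeriv_mix [IsFiniteMeasure μ] [IsFiniteMeasure ν] (p : ℝ) (ξ : Measure α)
    [SigmaFinite ξ] :
    (mix p μ ν).rnDeriv ξ =ᵐ[ξ]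
      fun x => ENNReal.ofReal p * μ.rnDeriv ξ x + ENNReal.ofReal (1 - p) * ν.rnDeriv ξ x := by
  have := μ.smul_finite (ENNReal.ofReal_ne_top (r := p))
  have := ν.smul_finite (ENNReal.ofReal_ne_top (r := 1 - p))
  filter_upwards [Measure.rnDeriv_add' (ENNReal.ofReal p • μ) (ENNReal.ofReal (1 - p) • ν) ξ,
    Measure.rnDeriv_smul_left_of_ne_top' μ ξ ENNReal.ofReal_ne_top,
    Measure.rnDeriv_smul_left_of_ne_top' ν ξ ENNReal.ofReal_ne_top] with x hadd hμ hν
  rw [mix, hadd, Pi.add_apply, hμ, hν]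
  rfl

end Mix

noncomputable def mixDensity (p : ℝ) (μ ν : Measure α) (x : α) : ℝ :=
  p * (μ.rnDeriv (μ + ν) x).toReal + (1 - p) * (ν.rnDeriv (μ + ν) x).toReal

lemma continuousAt_ofReal_mixDensity_mul_klFun {μ ν : Measure α} {q : ℝ} (h : ℝ) {x : α}
    (hx : mixDensity q μ ν x ≠ 0) :
    ContinuousAt (fun p => ENNReal.ofReal (mixDensity p μ ν x *
      klFun (h / mixDensity p μ ν x))) q := by
  refine ENNReal.continuous_ofReal.continuousAt.comp (f := fun p => mixDensity p μ ν x * _) ?_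
  unfold mixDensity at hx ⊢
  fun_prop (disch := exact hx)

section MixDensity

variable {μ ν : Measure α} [IsFiniteMeasure μ] [IsFiniteMeasure ν]

lemma ae_toReal_rnDeriv_add_eq_one :
    ∀ᵐ x ∂(μ + ν), (μ.rnDeriv (μ + ν) x).toReal + (ν.rnDeriv (μ + ν) x).toReal = 1 := by
  filter_upwards [Measure.rnDeriv_add' μ ν (μ + ν), Measure.rnDeriv_self (μ + ν),
    Measure.rnDeriv_ne_top μ (μ + ν), Measure.rnDeriv_ne_top ν (μ + ν)] with x hadd hself hμ hν
  rw [← ENNReal.toReal_add hμ hν, ← Pi.add_apply, ← hadd, hself, ENNReal.toReal_one]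

variable (μ ν) in
lemma ae_le_mixDensity {p δ : ℝ} (hp : δ ≤ p) (hp' : δ ≤ 1 - p) :
    ∀ᵐ x ∂(μ + ν), δ ≤ mixDensity p μ ν x := by
  filter_upwards [ae_toReal_rnDeriv_add_eq_one] with x hx
  have := (μ.rnDeriv (μ + ν) x).toReal_nonneg
  have := (ν.rnDeriv (μ + ν) x).toReal_nonneg
  unfold mixDensity
  nlinarith

variable (μ ν) in
lemma ae_mixDensity_le_one {p : ℝ} (hp0 : 0 ≤ p) (hp1 : p ≤ 1) :
    ∀ᵐ x ∂(μ + ν), mixDensity p μ ν x ≤ 1 := by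
  filter_upwards [ae_toReal_rnDeriv_add_eq_one] with x hx
  have := (μ.rnDeriv (μ + ν) x).toReal_nonneg
  have := (ν.rnDeriv (μ + ν) x).toReal_nonneg
  unfold mixDensity
  nlinarith

lemma ae_toReal_rnDeriv_pos_of_absolutelyContinuous (hμν : μ ≪ ν) :
    ∀ᵐ x ∂(μ + ν), 0 < (ν.rnDeriv (μ + ν) x).toReal := by
  have hν : ν ≪ μ + ν := Measure.AbsolutelyContinuous.rfl.add_right' μ
  have hpos : ∀ᵐ x ∂ν, 0 < ν.rnDeriv (μ + ν) x := Measure.rnDeriv_pos hν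
  filter_upwards [ae_add_measure_iff.2 ⟨hμν.ae_le hpos, hpos⟩,
    Measure.rnDeriv_ne_top ν (μ + ν)] with x hx hne
  exact ENNReal.toReal_pos hx.ne' hne

lemma absolutelyContinuous_of_ae_rnDeriv_ne_zero
    (h : ∀ᵐ x ∂(μ + ν), ν.rnDeriv (μ + ν) x ≠ 0) : μ ≪ ν := by
  have hν : ν ≪ μ + ν := Measure.AbsolutelyContinuous.rfl.add_right' μ
  have h' := withDensity_absolutelyContinuous' (Measure.measurable_rnDeriv _ _).aemeasurable h
  rw [Measure.withDensity_rnDeriv_eq ν (μ + ν) hν] at h'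
  exact (Measure.AbsolutelyContinuous.rfl.add_right ν).trans h'

lemma klDiv_mix_eq_lintegral {η : Measure α} [IsFiniteMeasure η] {p : ℝ} (hp0 : 0 ≤ p)
    (hp1 : p ≤ 1) (hη : η ≪ mix p μ ν) :
    klDiv η (mix p μ ν) = ∫⁻ x, ENNReal.ofReal (mixDensity p μ ν x *
      klFun ((η.rnDeriv (μ + ν) x).toReal / mixDensity p μ ν x)) ∂(μ + ν) := by
  have hmix : mix p μ ν ≪ μ + ν := mix_absolutelyContinuous
    (Measure.AbsolutelyContinuous.rfl.add_right ν)
    (Measure.AbsolutelyContinuous.rfl.add_right' μ) p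
  rw [klDiv_eq_lintegral_mul_klFun_div hη hmix]
  refine lintegral_congr_ae ?_
  filter_upwards [rnDeriv_mix (μ := μ) (ν := ν) p (μ + ν), Measure.rnDeriv_ne_top μ (μ + ν),
    Measure.rnDeriv_ne_top ν (μ + ν)] with x hx hμ hν
  rw [hx, ENNReal.toReal_add (ENNReal.mul_ne_top ENNReal.ofReal_ne_top hμ)
    (ENNReal.mul_ne_top ENNReal.ofReal_ne_top hν), ENNReal.toReal_mul, ENNReal.toReal_mul,
    ENNReal.toReal_ofReal hp0, ENNReal.toReal_ofReal (sub_nonneg.2 hp1)]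
  rfl

lemma continuousAt_klDiv_mix {η : Measure α} [IsFiniteMeasure η] (hη : η ≤ μ + ν) {q : ℝ}
    (hq0 : 0 < q) (hq1 : q < 1) : ContinuousAt (fun p => klDiv η (mix p μ ν)) q := by
  set δ := min (q / 2) ((1 - q) / 2)
  have hδ : 0 < δ := lt_min (by linarith) (by linarith)
  have hδq : δ ≤ q / 2 := min_le_left _ _
  have hδq' : δ ≤ (1 - q) / 2 := min_le_right _ _
  have hnhds : Ioo (q / 2) ((1 + q) / 2) ∈ 𝓝 q := Ioo_mem_nhds (by linarith) (by linarith)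
  have hρ : ∀ p ∈ Ioo (q / 2) ((1 + q) / 2), η ≪ mix p μ ν := fun p hp =>
    (Measure.absolutelyContinuous_of_le hη).trans
      ((absolutelyContinuous_mix_left (by linarith [hp.1])).add_left
        (absolutelyContinuous_mix_right (by linarith [hp.2])))
  refine ContinuousAt.congr ?_ (eventually_of_mem hnhds fun p hp =>
    (klDiv_mix_eq_lintegral (by linarith [hp.1]) (by linarith [hp.2]) (hρ p hp)).symm)
  refine tendsto_lintegral_filter_of_dominated_convergence (fun _ => ENNReal.ofReal δ⁻¹)
    (Eventually.of_forall fun p => by unfold mixDensity; fun_prop) ?_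
    (by simp [lintegral_const, ENNReal.mul_eq_top]) ?_
  · filter_upwards [hnhds] with p hp
    filter_upwards [ae_le_mixDensity μ ν (by linarith [hp.1] : δ ≤ p) (by linarith [hp.2]),
      ae_mixDensity_le_one μ ν (by linarith [hp.1] : 0 ≤ p) (by linarith [hp.2]),
      Measure.rnDeriv_le_one_of_le hη] with x hδm hm1 hle
    refine ENNReal.ofReal_le_ofReal ((mul_klFun_div_le_inv ENNReal.toReal_nonneg ?_
      (hδ.trans_le hδm) hm1).trans (inv_anti₀ hδ hδm))
    exact ENNReal.toReal_le_of_le_ofReal zero_le_one (by simpa using hle)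
  · filter_upwards [ae_le_mixDensity μ ν (by linarith : δ ≤ q) (by linarith)] with x hx
    exact continuousAt_ofReal_mixDensity_mul_klFun _ (hδ.trans_le hx).ne'

lemma tendsto_klDiv_mix_of_not_absolutelyContinuous (hμν : ¬ μ ≪ ν) :
    Tendsto (fun p => klDiv μ (mix p μ ν)) (𝓝[>] 0) (𝓝 ⊤) := by
  set S := {x | ν.rnDeriv (μ + ν) x = 0}
  have hS : MeasurableSet S := Measure.measurable_rnDeriv _ _ (measurableSet_singleton 0)
  have hSpos : (μ + ν) S ≠ 0 := fun h0 =>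
    hμν (absolutelyContinuous_of_ae_rnDeriv_ne_zero (ae_iff.2 (by simpa using h0)))
  have hlow : Tendsto (fun p : ℝ => ENNReal.ofReal (p * klFun p⁻¹) * (μ + ν) S)
      (𝓝[>] 0) (𝓝 ⊤) := by
    have h := ENNReal.Tendsto.mul_const (b := (μ + ν) S)
      (ENNReal.tendsto_ofReal_atTop.comp tendsto_mul_klFun_inv_nhdsGT_zero)
      (Or.inl ENNReal.top_ne_zero)
    rwa [ENNReal.top_mul hSpos] at h
  refine tendsto_nhds_top_mono hlow ?_
  filter_upwards [Ioo_mem_nhdsGT one_pos] with p hp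
  rw [klDiv_mix_eq_lintegral hp.1.le hp.2.le (absolutelyContinuous_mix_left hp.1),
    ← setLIntegral_const]
  refine le_trans (le_of_eq (setLIntegral_congr_fun_ae hS ?_)) (setLIntegral_le_lintegral _ _)
  filter_upwards [ae_toReal_rnDeriv_add_eq_one] with x hx hxS
  simp only [S, mem_ofPred_eq] at hxS
  simp only [hxS, ENNReal.toReal_zero, add_zero] at hx
  simp [mixDensity, hx, hxS, div_eq_mul_inv]

lemma tendsto_klDiv_mix_of_absolutelyContinuous (hμν : μ ≪ ν) :
    Tendsto (fun p => klDiv μ (mix p μ ν)) (𝓝[>] 0) (𝓝 (klDiv μ ν)) := by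
  set F : ℝ → α → ℝ≥0∞ := fun p x => ENNReal.ofReal (mixDensity p μ ν x *
    klFun ((μ.rnDeriv (μ + ν) x).toReal / mixDensity p μ ν x))
  have hF : ∀ᶠ p in 𝓝[>] 0, klDiv μ (mix p μ ν) = ∫⁻ x, F p x ∂(μ + ν) :=
    eventually_of_mem (Ioo_mem_nhdsGT one_pos) fun p hp =>
      klDiv_mix_eq_lintegral hp.1.le hp.2.le (absolutelyContinuous_mix_left hp.1)
  have hlim : klDiv μ ν = ∫⁻ x, F 0 x ∂(μ + ν) := by
    rw [← klDiv_mix_eq_lintegral le_rfl zero_le_one (by rwa [mix_zero]), mix_zero]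
  have hpos := ae_toReal_rnDeriv_pos_of_absolutelyContinuous hμν
  have hle : ∀ᶠ p in 𝓝[>] 0, klDiv μ (mix p μ ν) ≤ klDiv μ ν := by
    filter_upwards [hF, Ioo_mem_nhdsGT one_pos] with p hp hp1
    rw [hp, hlim]
    refine lintegral_mono_ae ?_
    filter_upwards [hpos] with x hx
    refine ENNReal.ofReal_le_ofReal ?_
    simpa [mixDensity] using
      mul_klFun_div_convexComb_le ENNReal.toReal_nonneg hx hp1.1.le hp1.2.le
  have hliminf : klDiv μ ν ≤ liminf (fun p => klDiv μ (mix p μ ν)) (𝓝[>] 0) := by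
    calc klDiv μ ν = ∫⁻ x, liminf (fun p => F p x) (𝓝[>] 0) ∂(μ + ν) := by
          rw [hlim]
          refine lintegral_congr_ae ?_
          filter_upwards [hpos] with x hx
          refine ((continuousAt_ofReal_mixDensity_mul_klFun _ ?_).tendsto.mono_left
            nhdsWithin_le_nhds).liminf_eq.symm
          simpa [mixDensity] using hx.ne'
      _ ≤ liminf (fun p => ∫⁻ x, F p x ∂(μ + ν)) (𝓝[>] 0) :=
          lintegral_liminf_le fun p => by unfold F mixDensity; fun_prop
      _ = _ := liminf_congr (hF.mono fun p hp => hp.symm)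
  exact tendsto_of_le_liminf_of_limsup_le hliminf (limsup_le_of_le (by isBoundedDefault) hle)

lemma tendsto_klDiv_mix_nhdsGT_zero :
    Tendsto (fun p => klDiv μ (mix p μ ν)) (𝓝[>] 0) (𝓝 (klDiv μ ν)) := by
  by_cases hμν : μ ≪ ν
  · exact tendsto_klDiv_mix_of_absolutelyContinuous hμν
  · rw [klDiv_of_not_ac hμν]
    exact tendsto_klDiv_mix_of_not_absolutelyContinuous hμν

lemma tendsto_lintegral_mul_sq_sub_div_mixDensity (hμν : μ ≪ ν) :
    Tendsto (fun p => ∫⁻ x, ENNReal.ofReal (p * ((μ.rnDeriv (μ + ν) x).toReal -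
      (ν.rnDeriv (μ + ν) x).toReal) ^ 2 / mixDensity p μ ν x) ∂(μ + ν)) (𝓝[>] 0) (𝓝 0) := by
  rw [← lintegral_zero]
  refine tendsto_lintegral_filter_of_dominated_convergence (fun _ => 1)
    (Eventually.of_forall fun p => by unfold mixDensity; fun_prop) ?_
    (by simp [lintegral_const]) ?_
  · filter_upwards [Ioo_mem_nhdsGT (by norm_num : (0 : ℝ) < 1 / 2)] with p hp
    filter_upwards [ae_toReal_rnDeriv_add_eq_one, ae_le_mixDensity μ ν (δ := p) le_rfl
      (by linarith [hp.2])] with x hx hm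
    exact ENNReal.ofReal_le_one.2 ((div_le_one (hp.1.trans_le hm)).2
      (mul_sq_sub_le_convexComb ENNReal.toReal_nonneg ENNReal.toReal_nonneg hx hp.1.le hp.2.le))
  · filter_upwards [ae_toReal_rnDeriv_pos_of_absolutelyContinuous hμν] with x hx
    have hcont : ContinuousAt (fun p => p * ((μ.rnDeriv (μ + ν) x).toReal -
        (ν.rnDeriv (μ + ν) x).toReal) ^ 2 / mixDensity p μ ν x) 0 := by
      unfold mixDensity
      fun_prop (disch := simpa using hx.ne')
    have h := (ENNReal.continuous_ofReal.continuousAt.comp hcont).tendsto.mono_left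
      (nhdsWithin_le_nhds (s := Ioi 0))
    rwa [Function.comp_apply, zero_mul, zero_div, ENNReal.ofReal_zero] at h

lemma tendsto_ofReal_inv_mul_klDiv_mix_nhdsGT_zero (hμν : μ ≪ ν) :
    Tendsto (fun p => ENNReal.ofReal p⁻¹ * klDiv ν (mix p μ ν)) (𝓝[>] 0) (𝓝 0) := by
  refine tendsto_of_tendsto_of_tendsto_of_le_of_le' tendsto_const_nhds
    (tendsto_lintegral_mul_sq_sub_div_mixDensity hμν) (Eventually.of_forall fun _ => zero_le) ?_
  filter_upwards [Ioo_mem_nhdsGT (by norm_num : (0 : ℝ) < 1 / 2)] with p hp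
  rw [klDiv_mix_eq_lintegral hp.1.le (by linarith [hp.2])
    (absolutelyContinuous_mix_right (by linarith [hp.2])), ← lintegral_const_mul' _ _
    ENNReal.ofReal_ne_top]
  refine lintegral_mono_ae ?_
  filter_upwards [ae_le_mixDensity μ ν (δ := p) le_rfl (by linarith [hp.2])] with x hm
  have hc : 0 < mixDensity p μ ν x := hp.1.trans_le hm
  rw [← ENNReal.ofReal_mul (inv_nonneg.2 hp.1.le)]
  refine ENNReal.ofReal_le_ofReal ?_
  calc p⁻¹ * (mixDensity p μ ν x * klFun ((ν.rnDeriv (μ + ν) x).toReal / mixDensity p μ ν x))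
      ≤ p⁻¹ * (p ^ 2 * ((μ.rnDeriv (μ + ν) x).toReal - (ν.rnDeriv (μ + ν) x).toReal) ^ 2 /
          mixDensity p μ ν x) :=
        mul_le_mul_of_nonneg_left (mul_klFun_div_convexComb_le_sq ENNReal.toReal_nonneg hc)
          (inv_nonneg.2 hp.1.le)
    _ = _ := by field_simp

end MixDensity

-- At `p = 0` the second term vanishes, because `(1 - 0) / 0 = 0` in Lean.
noncomputable def mixDivergence (p : ℝ) (μ ν : Measure α) : ℝ≥0∞ :=
  klDiv μ (mix p μ ν) + ENNReal.ofReal ((1 - p) / p) * klDiv ν (mix p μ ν)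

lemma mixDivergence_zero (μ ν : Measure α) : mixDivergence 0 μ ν = klDiv μ ν := by
  simp [mixDivergence, mix_zero]

section MixDivergence

variable {μ ν : Measure α} [IsFiniteMeasure μ] [IsFiniteMeasure ν]

lemma tendsto_mixDivergence_nhdsGT_zero :
    Tendsto (fun p => mixDivergence p μ ν) (𝓝[>] 0) (𝓝 (klDiv μ ν)) := by
  by_cases hμν : μ ≪ ν
  · have hsecond : Tendsto (fun p => ENNReal.ofReal ((1 - p) / p) * klDiv ν (mix p μ ν))
        (𝓝[>] 0) (𝓝 0) := by
      refine tendsto_of_tendsto_of_tendsto_of_le_of_le' tendsto_const_nhds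
        (tendsto_ofReal_inv_mul_klDiv_mix_nhdsGT_zero hμν)
        (Eventually.of_forall fun _ => zero_le) ?_
      filter_upwards [self_mem_nhdsWithin] with p (hp : 0 < p)
      gcongr
      rw [div_eq_mul_inv]
      exact mul_le_of_le_one_left (inv_nonneg.2 hp.le) (by linarith)
    have h := (tendsto_klDiv_mix_nhdsGT_zero (μ := μ) (ν := ν)).add hsecond
    rwa [add_zero] at h
  · rw [klDiv_of_not_ac hμν]
    exact tendsto_nhds_top_mono (klDiv_of_not_ac hμν ▸ tendsto_klDiv_mix_nhdsGT_zero)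
      (Eventually.of_forall fun _ => le_self_add)

lemma continuousOn_mixDivergence :
    ContinuousOn (fun p => mixDivergence p μ ν) (Ico 0 1) := by
  intro q hq
  rcases hq.1.eq_or_lt with rfl | hq0
  · have h := continuousWithinAt_Ioi_iff_Ici.1
      (mixDivergence_zero μ ν ▸ tendsto_mixDivergence_nhdsGT_zero)
    exact h.mono Ico_subset_Ici_self
  refine ContinuousAt.continuousWithinAt ?_
  have hcoef : ContinuousAt (fun p => ENNReal.ofReal ((1 - p) / p)) q :=
    ENNReal.continuous_ofReal.continuousAt.comp (by fun_prop (disch := exact hq0.ne'))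
  exact (continuousAt_klDiv_mix (Measure.le_add_right le_rfl) hq0 hq.2).add
    (ENNReal.Tendsto.mul hcoef (Or.inl (by simpa using div_pos (sub_pos.2 hq.2) hq0))
      (continuousAt_klDiv_mix (Measure.le_add_left le_rfl) hq0 hq.2)
      (Or.inr ENNReal.ofReal_ne_top))

end MixDivergence

lemma Fp_eq_mixDivergence_div {p : ℝ} (hp : p ∈ Ico (0 : ℝ) 1) (μ ν : Measure α)
    [IsProbabilityMeasure μ] [IsProbabilityMeasure ν] :
    Fp p μ ν = ((mixDivergence p μ ν / ENNReal.ofReal (log 2) : ℝ≥0∞) : EReal) := by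
  rcases hp.1.eq_or_lt with rfl | hp0
  · rw [Fp, if_pos rfl, mixDivergence_zero, klDiv2_eq_klDiv_div]
  have := isProbabilityMeasure_mix hp.1 hp.2.le μ ν
  have hcoef : (0 : ℝ) ≤ (1 - p) / p := div_nonneg (sub_nonneg.2 hp.2.le) hp0.le
  rw [Fp, if_neg hp0.ne', klDiv2_eq_klDiv_div, klDiv2_eq_klDiv_div, mixDivergence,
    ENNReal.add_div, mul_div_assoc, EReal.coe_ennreal_add, EReal.coe_ennreal_mul,
    EReal.coe_ennreal_ofReal, max_eq_left hcoef]

theorem stmt_2 (μK μN : Measure I01) [IsProbabilityMeasure μK] [IsProbabilityMeasure μN] :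
    ContinuousOn (fun p : ℝ => Fp p μK μN) (Set.Ico (0 : ℝ) 1)
      ∧ Tendsto (fun p : ℝ => Fp p μK μN) (nhdsWithin 0 (Set.Ioi 0))
          (nhds (klDiv2 μK μN)) := by
  have hcont : ContinuousOn (fun p : ℝ => Fp p μK μN) (Ico 0 1) :=
    (continuous_coe_ennreal_ereal.comp_continuousOn
      ((ENNReal.continuous_div_const _ (by simp [log_pos one_lt_two])).comp_continuousOn
        continuousOn_mixDivergence)).congr fun p hp => Fp_eq_mixDivergence_div hp μK μN
  refine ⟨hcont, ?_⟩
  have h0 := (hcont 0 ⟨le_rfl, one_pos⟩).mono Ioo_subset_Ico_self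
  rwa [ContinuousWithinAt, nhdsWithin_Ioo_eq_nhdsGT one_pos, Fp, if_pos rfl] at h0
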